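/- If the admissible family {φ(θ), θ ∈ T_0} is right-continuous in expectation along stopping times (RCE), then the value function family {v(S), S ∈ T_0} is also RCE: for any S ∈ T_0 and any sequence of stopping times S_n ↓ S a.s., E[v(S_n)] → E[v(S)]. -/

import Mathlib

/-!
Both inequalities rest on the identity `E[v(S)] = sup_{θ ∈ T_S} E[φ(θ)]`. The family
`{E[φ(θ) | F_S] : θ ∈ T_S}` is upward directed (stop at whichever of two times has the larger
conditional reward, an `F_S`-measurable choice), so its essential supremum is the a.s. limit of an
increasing sequence in it and monotone convergence gives the identity. Then `T_{S_n} ⊆ T_S` gives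
`E[v(S_n)] ≤ E[v(S)]`, while for `θ ∈ T_S` the times `θ ∨ S_n ∈ T_{S_n}` decrease to `θ`, so RCE of
`φ` gives `liminf E[v(S_n)] ≥ E[φ(θ)]`.

The identity needs the supremum to be finite, and this is where RCE enters a second time: as
integrals are real numbers, RCE demands convergence to a finite limit. Were the supremum infinite,
one could glue, along the `F_S`-measurable annuli `{i_n < v(S) ≤ i_{n+1}}`, stopping times whose
rewards carry mass `≥ n` on the `n`-th annulus; stopping at the glued time on `{v(S) ≤ i_{n+1}}`
and at `T` elsewhere gives a decreasing sequence of stopping times whose finite expected rewards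
tend to infinity.
-/

open MeasureTheory Filter ENNReal

variable {Ω : Type*}

/-- A stopping time of the filtration `ℱ` with values in `[0, T]` (an element of `T_0`). -/
def IsStoppingTimeIn {m : MeasurableSpace Ω} (ℱ : Filtration ℝ m) (T : ℝ)
    (τ : Ω → ℝ) : Prop :=
  IsStoppingTime ℱ (fun ω => (τ ω : WithTop ℝ)) ∧ ∀ ω, τ ω ∈ Set.Icc (0 : ℝ) T

/-- `θ` belongs to `T_S`: a `[0,T]`-valued stopping time with `θ ≥ S` a.s. -/
def MemTS {m : MeasurableSpace Ω} (ℱ : Filtration ℝ m) (μ : Measure Ω) (T : ℝ)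
    (S θ : Ω → ℝ) : Prop :=
  IsStoppingTimeIn ℱ T θ ∧ ∀ᵐ ω ∂μ, S ω ≤ θ ω

/-- An admissible family of nonnegative random variables indexed by stopping times:
`φ(τ)` is `F_τ`-measurable and `φ(τ) = φ(τ')` a.s. on `{τ = τ'}`. -/
def Admissible {m : MeasurableSpace Ω} (ℱ : Filtration ℝ m) (μ : Measure Ω) (T : ℝ)
    (φ : (Ω → ℝ) → Ω → ℝ) : Prop :=
  (∀ τ (hτ : IsStoppingTimeIn ℱ T τ),
      Measurable[hτ.1.measurableSpace] (φ τ) ∧ ∀ ω, 0 ≤ φ τ ω) ∧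
  (∀ τ τ', IsStoppingTimeIn ℱ T τ → IsStoppingTimeIn ℱ T τ' →
      ∀ᵐ ω ∂μ, τ ω = τ' ω → φ τ ω = φ τ' ω)

/-- `v` is an essential supremum of the family of random variables `s`:
`v` dominates every member a.s., and is a.s. below any other a.s. upper bound. -/
def IsEssSupOf {m : MeasurableSpace Ω} (μ : Measure Ω) (s : Set (Ω → ℝ))
    (v : Ω → ℝ) : Prop :=
  (∀ f ∈ s, f ≤ᵐ[μ] v) ∧ ∀ g : Ω → ℝ, (∀ f ∈ s, f ≤ᵐ[μ] g) → v ≤ᵐ[μ] g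

/-- The family `{E[φ(θ) | F_S] : θ ∈ T_S}`. -/
def valueSet {m : MeasurableSpace Ω} (ℱ : Filtration ℝ m) (μ : Measure Ω) (T : ℝ)
    (φ : (Ω → ℝ) → Ω → ℝ) (S : Ω → ℝ) (hS : IsStoppingTime ℱ (fun ω => (S ω : WithTop ℝ))) : Set (Ω → ℝ) :=
  {f | ∃ θ, MemTS ℱ μ T S θ ∧ f = μ[φ θ | hS.measurableSpace]}

/-- `v` is the value function family of the reward family `φ`:
`v(S) = ess sup_{θ ∈ T_S} E[φ(θ) | F_S]`, chosen `F_S`-measurable. -/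
def IsValueFam {m : MeasurableSpace Ω} (ℱ : Filtration ℝ m) (μ : Measure Ω) (T : ℝ)
    (φ v : (Ω → ℝ) → Ω → ℝ) : Prop :=
  ∀ S (hS : IsStoppingTimeIn ℱ T S),
    Measurable[hS.1.measurableSpace] (v S) ∧
    IsEssSupOf μ (valueSet ℱ μ T φ S hS.1) (v S)

/-- Right continuity in expectation along stopping times. -/
def RCEFam {m : MeasurableSpace Ω} (ℱ : Filtration ℝ m) (μ : Measure Ω) (T : ℝ)
    (φ : (Ω → ℝ) → Ω → ℝ) : Prop :=
  ∀ θ (θn : ℕ → Ω → ℝ), IsStoppingTimeIn ℱ T θ →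
    (∀ n, IsStoppingTimeIn ℱ T (θn n)) →
    (∀ᵐ ω ∂μ, Antitone (fun n => θn n ω) ∧
      Tendsto (fun n => θn n ω) atTop (nhds (θ ω))) →
    Tendsto (fun n => ∫ ω, φ (θn n) ω ∂μ) atTop (nhds (∫ ω, φ θ ω ∂μ))

/-- Left continuity in expectation along stopping times. -/
def LCEFam {m : MeasurableSpace Ω} (ℱ : Filtration ℝ m) (μ : Measure Ω) (T : ℝ)
    (φ : (Ω → ℝ) → Ω → ℝ) : Prop :=
  ∀ θ (θn : ℕ → Ω → ℝ), IsStoppingTimeIn ℱ T θ →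
    (∀ n, IsStoppingTimeIn ℱ T (θn n)) →
    (∀ᵐ ω ∂μ, Monotone (fun n => θn n ω) ∧
      Tendsto (fun n => θn n ω) atTop (nhds (θ ω))) →
    Tendsto (fun n => ∫ ω, φ (θn n) ω ∂μ) atTop (nhds (∫ ω, φ θ ω ∂μ))

/-- The integrability condition `v(0) = sup_{θ ∈ T_0} E[φ(θ)] < ∞`. -/
def BddReward {m : MeasurableSpace Ω} (ℱ : Filtration ℝ m) (μ : Measure Ω) (T : ℝ)
    (φ : (Ω → ℝ) → Ω → ℝ) : Prop :=
  (⨆ θ : {θ : Ω → ℝ // IsStoppingTimeIn ℱ T θ},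
      ∫⁻ ω, ENNReal.ofReal (φ θ.1 ω) ∂μ) < ⊤

/-- A supermartingale system: an admissible family `h` with
`E[h(θ) | F_{θ'}] ≤ h(θ')` a.s. whenever `θ ≥ θ'` a.s. -/
def SupermartSys {m : MeasurableSpace Ω} (ℱ : Filtration ℝ m) (μ : Measure Ω) (T : ℝ)
    (h : (Ω → ℝ) → Ω → ℝ) : Prop :=
  Admissible ℱ μ T h ∧
  ∀ θ θ' (hθ : IsStoppingTimeIn ℱ T θ) (hθ' : IsStoppingTimeIn ℱ T θ'),
    (∀ᵐ ω ∂μ, θ' ω ≤ θ ω) →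
    μ[h θ | hθ'.1.measurableSpace] ≤ᵐ[μ] h θ'

/-- `F_0` contains only sets of probability `0` or `1`. -/
def TrivialF0 {m : MeasurableSpace Ω} (ℱ : Filtration ℝ m) (μ : Measure Ω) : Prop :=
  ∀ A : Set Ω, MeasurableSet[ℱ 0] A → μ A = 0 ∨ μ A = 1

namespace MeasureTheory.IsStoppingTime

variable {ι : Type*} [Preorder ι] {m : MeasurableSpace Ω} {f : Filtration ι m}

theorem piecewise_of_le_of_measurableSet {ρ τ η : Ω → WithTop ι} (hρ : IsStoppingTime f ρ)
    (hτ : IsStoppingTime f τ) (hη : IsStoppingTime f η) (hρτ : ρ ≤ τ) (hρη : ρ ≤ η)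
    {s : Set Ω} [DecidablePred (· ∈ s)] (hs : MeasurableSet[hρ.measurableSpace] s) :
    IsStoppingTime f (s.piecewise τ η) := by
  intro i
  have hset : {ω | s.piecewise τ η ω ≤ i} = s ∩ {ω | τ ω ≤ i} ∪ sᶜ ∩ {ω | η ω ≤ i} := by
    ext ω
    by_cases hω : ω ∈ s <;> simp [hω]
  rw [hset]
  exact ((hρ.measurableSpace_mono hτ hρτ s hs).2 i).union
    ((hρ.measurableSpace_mono hη hρη sᶜ hs.compl).2 i)

theorem comp_of_le_of_measurableSet_eq {ρ : Ω → WithTop ι} (hρ : IsStoppingTime f ρ)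
    {τ : ℕ → Ω → WithTop ι} (hτ : ∀ n, IsStoppingTime f (τ n)) (hρτ : ∀ n, ρ ≤ τ n)
    {N : Ω → ℕ} (hN : ∀ n, MeasurableSet[hρ.measurableSpace] {ω | N ω = n}) :
    IsStoppingTime f fun ω => τ (N ω) ω := by
  intro i
  have hset : {ω | τ (N ω) ω ≤ i} = ⋃ n, {ω | N ω = n} ∩ {ω | τ n ω ≤ i} := by
    ext ω
    simp
  rw [hset]
  exact MeasurableSet.iUnion fun n => (hρ.measurableSpace_mono (hτ n) (hρτ n) _ (hN n)).2 i

end MeasureTheory.IsStoppingTime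

theorem condExp_piecewise {m m₀ : MeasurableSpace Ω} {μ : Measure Ω}
    {f g : Ω → ℝ} {s : Set Ω} [DecidablePred (· ∈ s)] (hf : Integrable f μ)
    (hg : Integrable g μ) (hs : MeasurableSet[m] s) :
    μ[s.piecewise f g|m] =ᵐ[μ] s.piecewise (μ[f|m]) (μ[g|m]) := by
  by_cases hm : m ≤ m₀
  swap
  · simp [condExp_of_not_le hm]
  rw [← Set.indicator_add_compl_eq_piecewise, ← Set.indicator_add_compl_eq_piecewise]
  exact (condExp_add (hf.indicator (hm s hs)) (hg.indicator (hm _ hs.compl)) m).trans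
    ((condExp_indicator hf hs).add (condExp_indicator hg hs.compl))

section EssSup


variable {m : MeasurableSpace Ω} {μ : Measure Ω}

theorem ae_le_of_lintegral_max_le {f g : Ω → ℝ≥0∞} (hf : AEMeasurable f μ)
    (hg : AEMeasurable g μ) (hg_top : ∫⁻ ω, g ω ∂μ ≠ ∞)
    (h : ∫⁻ ω, max (f ω) (g ω) ∂μ ≤ ∫⁻ ω, g ω ∂μ) : f ≤ᵐ[μ] g := by
  filter_upwards [ae_eq_of_ae_le_of_lintegral_le
    (ae_of_all _ fun ω => le_max_right (f ω) (g ω)) hg_top (hf.sup hg) h] with ω hω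
  exact hω ▸ le_max_left _ _

theorem exists_seq_ae_le_of_directed {s : Set (Ω → ℝ)}
    (hdir : ∀ f ∈ s, ∀ g ∈ s, ∃ h ∈ s, f ≤ᵐ[μ] h ∧ g ≤ᵐ[μ] h)
    {F : ℕ → Ω → ℝ} (hF : ∀ n, F n ∈ s) :
    ∃ G : ℕ → Ω → ℝ, (∀ n, G n ∈ s) ∧ (∀ n, F n ≤ᵐ[μ] G n) ∧ ∀ n, G n ≤ᵐ[μ] G (n + 1) := by
  choose! up hup hup_left hup_right using hdir
  let G : ℕ → Ω → ℝ := fun n => Nat.rec (F 0) (fun k g => up g (F (k + 1))) n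
  have hG : ∀ n, G n ∈ s := fun n => by
    induction n with
    | zero => exact hF 0
    | succ k ih => exact hup _ ih _ (hF _)
  refine ⟨G, hG, fun n => ?_, fun n => hup_left _ (hG n) _ (hF _)⟩
  cases n with
  | zero => exact EventuallyLE.refl _ _
  | succ k => exact hup_right _ (hG k) _ (hF _)

theorem ae_ofReal_le_iSup_of_directed {s : Set (Ω → ℝ)}
    (hdir : ∀ f ∈ s, ∀ g ∈ s, ∃ h ∈ s, f ≤ᵐ[μ] h ∧ g ≤ᵐ[μ] h)
    (hmeas : ∀ f ∈ s, AEMeasurable f μ) {c : ℝ≥0∞} (hc : c ≠ ∞)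
    (hle : ∀ f ∈ s, ∫⁻ ω, ENNReal.ofReal (f ω) ∂μ ≤ c) {g : ℕ → Ω → ℝ} (hg : ∀ n, g n ∈ s)
    (hg_mono : ∀ᵐ ω ∂μ, Monotone fun n => g n ω)
    (hG : ∫⁻ ω, ⨆ n, ENNReal.ofReal (g n ω) ∂μ = c) {f : Ω → ℝ} (hf : f ∈ s) :
    (fun ω => ENNReal.ofReal (f ω)) ≤ᵐ[μ] fun ω => ⨆ n, ENNReal.ofReal (g n ω) := by
  have hmeas' : ∀ f ∈ s, AEMeasurable (fun ω => ENNReal.ofReal (f ω)) μ :=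
    fun f hf => (hmeas f hf).ennreal_ofReal
  refine ae_le_of_lintegral_max_le (hmeas' f hf) (AEMeasurable.iSup fun n => hmeas' _ (hg n))
    (hG ▸ hc) ?_
  -- `max f G` is the increasing limit of `max f (g n)`, each below some member of `s`
  choose h hh hfh hgh using fun n => hdir f hf (g n) (hg n)
  simp only [sup_iSup]
  rw [lintegral_iSup' (f := fun n ω => max (ENNReal.ofReal (f ω)) (ENNReal.ofReal (g n ω)))
    (fun n => (hmeas' f hf).sup (hmeas' _ (hg n)))
    (hg_mono.mono fun ω hω _ _ hij => sup_le_sup_left (ENNReal.ofReal_le_ofReal (hω hij)) _), hG]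
  refine iSup_le fun n => le_trans (lintegral_mono_ae ?_) (hle _ (hh n))
  filter_upwards [hfh n, hgh n] with ω h₁ h₂
  exact sup_le (ENNReal.ofReal_le_ofReal h₁) (ENNReal.ofReal_le_ofReal h₂)

theorem exists_seq_lintegral_iSup_eq_sSup {s : Set (Ω → ℝ)} (hne : s.Nonempty)
    (hint : ∀ f ∈ s, Integrable f μ) (hnn : ∀ f ∈ s, 0 ≤ᵐ[μ] f)
    (hdir : ∀ f ∈ s, ∀ g ∈ s, ∃ h ∈ s, f ≤ᵐ[μ] h ∧ g ≤ᵐ[μ] h)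
    (hB : BddAbove ((fun f => ∫ ω, f ω ∂μ) '' s)) :
    ∃ g : ℕ → Ω → ℝ, (∀ n, g n ∈ s) ∧ (∀ᵐ ω ∂μ, Monotone fun n => g n ω) ∧
      ∫⁻ ω, ⨆ n, ENNReal.ofReal (g n ω) ∂μ =
        ENNReal.ofReal (sSup ((fun f => ∫ ω, f ω ∂μ) '' s)) := by
  have hlint : ∀ f ∈ s, ∫⁻ ω, ENNReal.ofReal (f ω) ∂μ = ENNReal.ofReal (∫ ω, f ω ∂μ) :=
    fun f hf => (ofReal_integral_eq_lintegral_ofReal (hint f hf) (hnn f hf)).symm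
  obtain ⟨u, -, hu, hu_mem⟩ := exists_seq_tendsto_sSup (hne.image _) hB
  choose F hF hFu using hu_mem
  obtain ⟨g, hg, hFg, hg_succ⟩ := exists_seq_ae_le_of_directed hdir hF
  have hg_mono : ∀ᵐ ω ∂μ, Monotone fun n => g n ω := by
    filter_upwards [ae_all_iff.2 hg_succ] with ω hω
    exact monotone_nat_of_le_succ hω
  refine ⟨g, hg, hg_mono, ?_⟩
  rw [lintegral_iSup' (fun n => (hint _ (hg n)).aemeasurable.ennreal_ofReal)
    (hg_mono.mono fun ω hω _ _ hij => ENNReal.ofReal_le_ofReal (hω hij))]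
  refine le_antisymm (iSup_le fun n => (hlint _ (hg n)).trans_le
    (ENNReal.ofReal_le_ofReal (le_csSup hB ⟨g n, hg n, rfl⟩))) ?_
  refine le_of_tendsto' ((ENNReal.continuous_ofReal.tendsto _).comp hu) fun n => ?_
  calc ENNReal.ofReal (u n) = ∫⁻ ω, ENNReal.ofReal (F n ω) ∂μ := by rw [← hFu n, hlint _ (hF n)]
    _ ≤ ∫⁻ ω, ENNReal.ofReal (g n ω) ∂μ :=
      lintegral_mono_ae ((hFg n).mono fun ω hω => ENNReal.ofReal_le_ofReal hω)
    _ ≤ ⨆ n, ∫⁻ ω, ENNReal.ofReal (g n ω) ∂μ := le_iSup (fun n => ∫⁻ ω, _ ∂μ) n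

theorem IsEssSupOf.integral_eq_sSup {s : Set (Ω → ℝ)} {v : Ω → ℝ} (hv : IsEssSupOf μ s v)
    (hne : s.Nonempty) (hint : ∀ f ∈ s, Integrable f μ) (hnn : ∀ f ∈ s, 0 ≤ᵐ[μ] f)
    (hdir : ∀ f ∈ s, ∀ g ∈ s, ∃ h ∈ s, f ≤ᵐ[μ] h ∧ g ≤ᵐ[μ] h)
    (hB : BddAbove ((fun f => ∫ ω, f ω ∂μ) '' s)) :
    Integrable v μ ∧ ∫ ω, v ω ∂μ = sSup ((fun f => ∫ ω, f ω ∂μ) '' s) := by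
  set α := sSup ((fun f => ∫ ω, f ω ∂μ) '' s)
  have hle_α : ∀ f ∈ s, ∫⁻ ω, ENNReal.ofReal (f ω) ∂μ ≤ ENNReal.ofReal α := fun f hf => by
    rw [← ofReal_integral_eq_lintegral_ofReal (hint f hf) (hnn f hf)]
    exact ENNReal.ofReal_le_ofReal (le_csSup hB ⟨f, hf, rfl⟩)
  obtain ⟨g, hg, hg_mono, hG_lint⟩ := exists_seq_lintegral_iSup_eq_sSup hne hint hnn hdir hB
  set G : Ω → ℝ≥0∞ := fun ω => ⨆ n, ENNReal.ofReal (g n ω)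
  have hG_meas : AEMeasurable G μ :=
    AEMeasurable.iSup fun n => (hint _ (hg n)).aemeasurable.ennreal_ofReal
  have hG_lt_top : ∀ᵐ ω ∂μ, G ω < ∞ := ae_lt_top' hG_meas (hG_lint ▸ ENNReal.ofReal_ne_top)
  have hv_eq : v =ᵐ[μ] fun ω => (G ω).toReal := by
    refine (hv.2 _ fun f hf => ?_).antisymm ?_
    · filter_upwards [ae_ofReal_le_iSup_of_directed hdir (fun f hf => (hint f hf).aemeasurable)
        ENNReal.ofReal_ne_top hle_α hg hg_mono hG_lint hf, hG_lt_top] with ω h₁ h₂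
      exact (ENNReal.ofReal_le_iff_le_toReal h₂.ne).1 h₁
    · filter_upwards [ae_all_iff.2 fun n => hv.1 _ (hg n), hnn _ (hg 0)] with ω h₁ h₂
      exact ENNReal.toReal_le_of_le_ofReal (h₂.trans (h₁ 0))
        (iSup_le fun n => ENNReal.ofReal_le_ofReal (h₁ n))
  refine ⟨(integrable_toReal_of_lintegral_ne_top hG_meas (hG_lint ▸ ENNReal.ofReal_ne_top)).congr
    hv_eq.symm, ?_⟩
  rw [integral_congr_ae hv_eq, integral_toReal hG_meas hG_lt_top, hG_lint,
    ENNReal.toReal_ofReal]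
  obtain ⟨f₀, hf₀⟩ := hne
  exact (integral_nonneg_of_ae (hnn f₀ hf₀)).trans (le_csSup hB ⟨f₀, hf₀, rfl⟩)

end EssSup

section StoppingTimeIn

variable {m : MeasurableSpace Ω} {ℱ : Filtration ℝ m} {T : ℝ}

lemma isStoppingTimeIn_const (hT : 0 ≤ T) : IsStoppingTimeIn ℱ T fun _ => T :=
  ⟨isStoppingTime_const ℱ T, fun _ => ⟨hT, le_rfl⟩⟩

lemma IsStoppingTimeIn.max {τ σ : Ω → ℝ} (hτ : IsStoppingTimeIn ℱ T τ)
    (hσ : IsStoppingTimeIn ℱ T σ) : IsStoppingTimeIn ℱ T fun ω => max (τ ω) (σ ω) :=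
  ⟨by simpa only [WithTop.coe_max] using hτ.1.max hσ.1,
    fun ω => ⟨(hτ.2 ω).1.trans (le_max_left _ _), max_le (hτ.2 ω).2 (hσ.2 ω).2⟩⟩

lemma IsStoppingTimeIn.piecewise {R τ η : Ω → ℝ}
    (hR : IsStoppingTime ℱ fun ω => (R ω : WithTop ℝ)) (hτ : IsStoppingTimeIn ℱ T τ)
    (hη : IsStoppingTimeIn ℱ T η) (hRτ : R ≤ τ) (hRη : R ≤ η) {s : Set Ω}
    [DecidablePred (· ∈ s)] (hs : MeasurableSet[hR.measurableSpace] s) :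
    IsStoppingTimeIn ℱ T (s.piecewise τ η) := by
  refine ⟨?_, fun ω => ?_⟩
  · have h := hR.piecewise_of_le_of_measurableSet hτ.1 hη.1
      (fun ω => WithTop.coe_le_coe.2 (hRτ ω)) (fun ω => WithTop.coe_le_coe.2 (hRη ω)) hs
    convert h using 1
    ext ω
    by_cases hω : ω ∈ s <;> simp [hω]
  · by_cases hω : ω ∈ s <;> simp [hω, hτ.2 ω, hη.2 ω]

lemma IsStoppingTimeIn.comp_of_le_of_measurableSet_eq {R : Ω → ℝ}
    (hR : IsStoppingTime ℱ fun ω => (R ω : WithTop ℝ)) {σ : ℕ → Ω → ℝ}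
    (hσ : ∀ n, IsStoppingTimeIn ℱ T (σ n)) (hRσ : ∀ n, R ≤ σ n) {N : Ω → ℕ}
    (hN : ∀ n, MeasurableSet[hR.measurableSpace] {ω | N ω = n}) :
    IsStoppingTimeIn ℱ T fun ω => σ (N ω) ω :=
  ⟨hR.comp_of_le_of_measurableSet_eq (fun n => (hσ n).1)
    (fun n ω => WithTop.coe_le_coe.2 (hRσ n ω)) hN, fun ω => (hσ (N ω)).2 ω⟩

variable {μ : Measure Ω} {φ : (Ω → ℝ) → Ω → ℝ}

lemma memTS_self {R : Ω → ℝ} (hR : IsStoppingTimeIn ℱ T R) : MemTS ℱ μ T R R :=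
  ⟨hR, ae_of_all _ fun _ => le_rfl⟩

lemma memTS_of_le {R τ : Ω → ℝ} (hτ : IsStoppingTimeIn ℱ T τ) (hRτ : R ≤ τ) :
    MemTS ℱ μ T R τ :=
  ⟨hτ, ae_of_all _ hRτ⟩

lemma MemTS.mono {S S' τ : Ω → ℝ} (hτ : MemTS ℱ μ T S' τ) (hSS' : ∀ᵐ ω ∂μ, S ω ≤ S' ω) :
    MemTS ℱ μ T S τ :=
  ⟨hτ.1, by filter_upwards [hτ.2, hSS'] with ω h₁ h₂ using h₂.trans h₁⟩

lemma Admissible.nonneg (hφ : Admissible ℱ μ T φ) {τ : Ω → ℝ} (hτ : IsStoppingTimeIn ℱ T τ) :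
    0 ≤ᵐ[μ] φ τ :=
  ae_of_all _ (hφ.1 τ hτ).2

lemma Admissible.aestronglyMeasurable (hφ : Admissible ℱ μ T φ) {τ : Ω → ℝ}
    (hτ : IsStoppingTimeIn ℱ T τ) : AEStronglyMeasurable (φ τ) μ :=
  ((hφ.1 τ hτ).1.mono hτ.1.measurableSpace_le le_rfl).aestronglyMeasurable

lemma Admissible.piecewise_ae_eq (hφ : Admissible ℱ μ T φ) {τ η : Ω → ℝ} {s : Set Ω}
    [DecidablePred (· ∈ s)] (hs : IsStoppingTimeIn ℱ T (s.piecewise τ η))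
    (hτ : IsStoppingTimeIn ℱ T τ) (hη : IsStoppingTimeIn ℱ T η) :
    φ (s.piecewise τ η) =ᵐ[μ] s.piecewise (φ τ) (φ η) := by
  filter_upwards [hφ.2 _ _ hs hτ, hφ.2 _ _ hs hη] with ω h₁ h₂
  by_cases hω : ω ∈ s <;> simp [hω] at h₁ h₂ ⊢ <;> assumption

lemma Admissible.max_self_ae_eq (hφ : Admissible ℱ μ T φ) {R τ : Ω → ℝ}
    (hτ : MemTS ℱ μ T R τ) (hR : IsStoppingTimeIn ℱ T R) :
    φ (fun ω => max (τ ω) (R ω)) =ᵐ[μ] φ τ :=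
  by filter_upwards [hφ.2 _ _ (hτ.1.max hR) hτ.1, hτ.2] with ω h₁ h₂ using h₁ (max_eq_left h₂)

end StoppingTimeIn

def expectedRewards {m : MeasurableSpace Ω} (ℱ : Filtration ℝ m) (μ : Measure Ω) (T : ℝ)
    (φ : (Ω → ℝ) → Ω → ℝ) (R : Ω → ℝ) : Set ℝ :=
  (fun τ => ∫ ω, φ τ ω ∂μ) '' {τ | MemTS ℱ μ T R τ}

section ValueSet

variable {m : MeasurableSpace Ω} {ℱ : Filtration ℝ m} {μ : Measure Ω} {T : ℝ}
  {φ : (Ω → ℝ) → Ω → ℝ} {R : Ω → ℝ}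

lemma integral_mem_expectedRewards {τ : Ω → ℝ} (hτ : MemTS ℱ μ T R τ) :
    ∫ ω, φ τ ω ∂μ ∈ expectedRewards ℱ μ T φ R :=
  ⟨τ, hτ, rfl⟩

lemma expectedRewards_subset {S : Ω → ℝ} (hRS : ∀ᵐ ω ∂μ, R ω ≤ S ω) :
    expectedRewards ℱ μ T φ S ⊆ expectedRewards ℱ μ T φ R :=
  Set.image_mono fun _ hτ => MemTS.mono hτ hRS

lemma image_integral_valueSet [IsFiniteMeasure μ] (hR : IsStoppingTimeIn ℱ T R) :
    (fun f => ∫ ω, f ω ∂μ) '' valueSet ℱ μ T φ R hR.1 = expectedRewards ℱ μ T φ R := by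
  ext x
  simp only [valueSet, expectedRewards, Set.mem_image, Set.mem_ofPred_eq]
  constructor
  · rintro ⟨_, ⟨τ, hτ, rfl⟩, rfl⟩
    exact ⟨τ, hτ, (integral_condExp hR.1.measurableSpace_le).symm⟩
  · rintro ⟨τ, hτ, rfl⟩
    exact ⟨_, ⟨τ, hτ, rfl⟩, integral_condExp hR.1.measurableSpace_le⟩

lemma valueSet_directed (hφ : Admissible ℱ μ T φ) (hR : IsStoppingTimeIn ℱ T R) :
    ∀ f ∈ valueSet ℱ μ T φ R hR.1, ∀ g ∈ valueSet ℱ μ T φ R hR.1,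
      ∃ h ∈ valueSet ℱ μ T φ R hR.1, f ≤ᵐ[μ] h ∧ g ≤ᵐ[μ] h := by
  classical
  set 𝒢 := hR.1.measurableSpace
  -- pasting along an `F_R`-set needs `R ≤ τᵢ` everywhere, not just a.s.: pass to `τᵢ ⊔ R`
  suffices key : ∀ τ₁ τ₂, IsStoppingTimeIn ℱ T τ₁ → IsStoppingTimeIn ℱ T τ₂ → R ≤ τ₁ → R ≤ τ₂ →
      ∃ h ∈ valueSet ℱ μ T φ R hR.1, μ[φ τ₁|𝒢] ≤ᵐ[μ] h ∧ μ[φ τ₂|𝒢] ≤ᵐ[μ] h by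
    rintro _ ⟨τ₁, hτ₁, rfl⟩ _ ⟨τ₂, hτ₂, rfl⟩
    obtain ⟨h, hh, h₁, h₂⟩ := key _ _ (hτ₁.1.max hR) (hτ₂.1.max hR)
      (fun _ => le_max_right _ _) (fun _ => le_max_right _ _)
    exact ⟨h, hh, (condExp_congr_ae (hφ.max_self_ae_eq hτ₁ hR)).symm.trans_le h₁,
      (condExp_congr_ae (hφ.max_self_ae_eq hτ₂ hR)).symm.trans_le h₂⟩
  intro τ₁ τ₂ hτ₁ hτ₂ hRτ₁ hRτ₂
  by_cases hi₁ : Integrable (φ τ₁) μ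
  swap
  · refine ⟨_, ⟨τ₂, memTS_of_le hτ₂ hRτ₂, rfl⟩, ?_, EventuallyLE.refl _ _⟩
    rw [condExp_of_not_integrable hi₁]
    exact condExp_nonneg (hφ.nonneg hτ₂)
  by_cases hi₂ : Integrable (φ τ₂) μ
  swap
  · refine ⟨_, ⟨τ₁, memTS_of_le hτ₁ hRτ₁, rfl⟩, EventuallyLE.refl _ _, ?_⟩
    rw [condExp_of_not_integrable hi₂]
    exact condExp_nonneg (hφ.nonneg hτ₁)
  -- stop at `τ₁` where its conditional reward is the larger one, at `τ₂` elsewhere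
  set A := {ω | μ[φ τ₂|𝒢] ω ≤ μ[φ τ₁|𝒢] ω}
  have hA : MeasurableSet[𝒢] A :=
    measurableSet_le stronglyMeasurable_condExp.measurable stronglyMeasurable_condExp.measurable
  have hτ : IsStoppingTimeIn ℱ T (A.piecewise τ₁ τ₂) := .piecewise hR.1 hτ₁ hτ₂ hRτ₁ hRτ₂ hA
  have hRτ : R ≤ A.piecewise τ₁ τ₂ := fun ω => by
    by_cases hω : ω ∈ A <;> simp [hω, hRτ₁ ω, hRτ₂ ω]
  have hce : μ[φ (A.piecewise τ₁ τ₂)|𝒢] =ᵐ[μ] A.piecewise (μ[φ τ₁|𝒢]) (μ[φ τ₂|𝒢]) :=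
    (condExp_congr_ae (hφ.piecewise_ae_eq hτ hτ₁ hτ₂)).trans (condExp_piecewise hi₁ hi₂ hA)
  have hmax : A.piecewise (μ[φ τ₁|𝒢]) (μ[φ τ₂|𝒢]) = fun ω => max (μ[φ τ₁|𝒢] ω) (μ[φ τ₂|𝒢] ω) := by
    ext ω
    by_cases hω : ω ∈ A
    · simp [hω, max_eq_left (show μ[φ τ₂|𝒢] ω ≤ μ[φ τ₁|𝒢] ω from hω)]
    · simp [hω, max_eq_right (le_of_not_ge (show ¬ μ[φ τ₂|𝒢] ω ≤ μ[φ τ₁|𝒢] ω from hω))]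
  rw [hmax] at hce
  exact ⟨_, ⟨_, memTS_of_le hτ hRτ, rfl⟩,
    EventuallyLE.trans (ae_of_all _ fun _ => le_max_left _ _) hce.symm.le,
    EventuallyLE.trans (ae_of_all _ fun _ => le_max_right _ _) hce.symm.le⟩

end ValueSet

open Topology

lemma monotone_setOf_le_natCast (f : Ω → ℝ) : Monotone fun i : ℕ => {ω | f ω ≤ i} :=
  fun _ _ hij _ hω => (show f _ ≤ _ from hω).trans (Nat.cast_le.2 hij)

section Finiteness

variable {m : MeasurableSpace Ω} {ℱ : Filtration ℝ m} {μ : Measure Ω} {T : ℝ}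
  {φ v : (Ω → ℝ) → Ω → ℝ} {R : Ω → ℝ}

lemma RCEFam.tendsto_integral_piecewise (hrce : RCEFam ℱ μ T φ) (hT : 0 ≤ T)
    (hR : IsStoppingTime ℱ fun ω => (R ω : WithTop ℝ)) {τ : Ω → ℝ}
    (hτ : IsStoppingTimeIn ℱ T τ) (hRτ : R ≤ τ) {D : ℕ → Set Ω}
    [∀ n, DecidablePred (· ∈ D n)] (hD : ∀ n, MeasurableSet[hR.measurableSpace] (D n))
    (hD_mono : Monotone D) (hD_cover : ∀ ω, ∃ n, ω ∈ D n) :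
    Tendsto (fun n => ∫ ω, φ ((D n).piecewise τ fun _ => T) ω ∂μ) atTop
      (𝓝 (∫ ω, φ τ ω ∂μ)) := by
  refine hrce τ _ hτ (fun n => .piecewise hR hτ (isStoppingTimeIn_const hT) hRτ
    (fun ω => (hRτ ω).trans (hτ.2 ω).2) (hD n)) (ae_of_all _ fun ω => ⟨fun i j hij => ?_, ?_⟩)
  · by_cases hi : ω ∈ D i
    · simp [hi, hD_mono hij hi]
    · by_cases hj : ω ∈ D j <;> simp [hi, hj, (hτ.2 ω).2]
  · obtain ⟨n₀, hn₀⟩ := hD_cover ω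
    exact tendsto_atTop_of_eventually_const (i₀ := n₀) fun n hn => by simp [hD_mono hn hn₀]

lemma RCEFam.tendsto_integral_max (hrce : RCEFam ℱ μ T φ) {S τ : Ω → ℝ}
    {Sn : ℕ → Ω → ℝ} (hτ : MemTS ℱ μ T S τ) (hSn : ∀ n, IsStoppingTimeIn ℱ T (Sn n))
    (hconv : ∀ᵐ ω ∂μ, Antitone (fun n => Sn n ω) ∧ Tendsto (fun n => Sn n ω) atTop (𝓝 (S ω))) :
    Tendsto (fun n => ∫ ω, φ (fun ω => max (τ ω) (Sn n ω)) ω ∂μ) atTop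
      (𝓝 (∫ ω, φ τ ω ∂μ)) := by
  refine hrce τ _ hτ.1 (fun n => hτ.1.max (hSn n)) ?_
  filter_upwards [hconv, hτ.2] with ω h hSτ
  refine ⟨fun i j hij => max_le_max le_rfl (h.1 hij), ?_⟩
  simpa [max_eq_left hSτ] using (tendsto_const_nhds (x := τ ω)).max h.2

lemma exists_integrable_integral_gt (hφ : Admissible ℱ μ T φ) (hR : IsStoppingTimeIn ℱ T R)
    (hunb : ¬ BddAbove (expectedRewards ℱ μ T φ R)) (M : ℝ) :
    ∃ τ, IsStoppingTimeIn ℱ T τ ∧ R ≤ τ ∧ Integrable (φ τ) μ ∧ M < ∫ ω, φ τ ω ∂μ := by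
  obtain ⟨_, ⟨τ, hτ, rfl⟩, hM⟩ := not_bddAbove_iff.1 hunb (max M 0)
  replace hM : max M 0 < ∫ ω, φ τ ω ∂μ := hM
  have hint : Integrable (φ τ) μ := by
    by_contra h
    rw [integral_undef h] at hM
    exact (le_max_right M 0).not_gt hM
  have hmax := hφ.max_self_ae_eq hτ hR
  refine ⟨_, hτ.1.max hR, fun _ => le_max_right _ _, hint.congr hmax.symm, ?_⟩
  rw [integral_congr_ae hmax]
  exact (le_max_left M 0).trans_lt hM

lemma IsValueFam.measurableSet_le (hv : IsValueFam ℱ μ T φ v) (hR : IsStoppingTimeIn ℱ T R)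
    (c : ℝ) : MeasurableSet[hR.1.measurableSpace] {ω | v R ω ≤ c} :=
  (hv R hR).1 measurableSet_Iic

lemma IsValueFam.setIntegral_le [IsProbabilityMeasure μ] (hv : IsValueFam ℱ μ T φ v)
    (hR : IsStoppingTimeIn ℱ T R) {τ : Ω → ℝ} (hτ : MemTS ℱ μ T R τ)
    (hint : Integrable (φ τ) μ) {c : ℝ} (hc : 0 ≤ c) :
    ∫ ω in {ω | v R ω ≤ c}, φ τ ω ∂μ ≤ c := by
  have hA := hv.measurableSet_le hR c
  calc ∫ ω in {ω | v R ω ≤ c}, φ τ ω ∂μ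
      = ∫ ω in {ω | v R ω ≤ c}, μ[φ τ|hR.1.measurableSpace] ω ∂μ :=
        (setIntegral_condExp hR.1.measurableSpace_le hint hA).symm
    _ ≤ ∫ _ in {ω | v R ω ≤ c}, c ∂μ := by
        refine setIntegral_mono_ae_restrict integrable_condExp.integrableOn
          (integrableOn_const (measure_ne_top _ _)) ?_
        refine (ae_restrict_iff' (hR.1.measurableSpace_le _ hA)).2 ?_
        filter_upwards [(hv R hR).2.1 _ ⟨τ, hτ, rfl⟩] with ω h hω using h.trans hω
    _ = μ.real {ω | v R ω ≤ c} * c := by rw [setIntegral_const, smul_eq_mul]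
    _ ≤ c := mul_le_of_le_one_left hc measureReal_le_one

lemma RCEFam.exists_integrableOn_terminal (hrce : RCEFam ℱ μ T φ) (hT : 0 ≤ T)
    (hφ : Admissible ℱ μ T φ) (hv : IsValueFam ℱ μ T φ v) (hR : IsStoppingTimeIn ℱ T R)
    {τ : Ω → ℝ} (hτ : IsStoppingTimeIn ℱ T τ) (hRτ : R ≤ τ) (hτ_ne : ∫ ω, φ τ ω ∂μ ≠ 0) :
    ∃ i : ℕ, IntegrableOn (φ fun _ => T) {ω | v R ω ≤ i}ᶜ μ := by
  classical
  by_contra! hno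
  set C : ℕ → Set Ω := fun i => {ω | v R ω ≤ i}
  have hC i : MeasurableSet[hR.1.measurableSpace] (C i) := hv.measurableSet_le hR i
  have hlim := hrce.tendsto_integral_piecewise hT hR.1 hτ hRτ hC
    (monotone_setOf_le_natCast _) fun ω => exists_nat_ge (v R ω)
  -- off `C i` the stopped reward is the terminal one, so it is never integrable and its Bochner
  -- integral is the junk value `0`
  refine hτ_ne (tendsto_nhds_unique hlim (tendsto_const_nhds.congr fun i =>
    (integral_undef fun hi => hno i ?_).symm))
  have hρ : IsStoppingTimeIn ℱ T ((C i).piecewise τ fun _ => T) :=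
    .piecewise hR.1 hτ (isStoppingTimeIn_const hT) hRτ (fun ω => (hR.2 ω).2) (hC i)
  refine (hi.restrict (s := (C i)ᶜ)).congr ?_
  filter_upwards [ae_restrict_of_ae (hφ.piecewise_ae_eq hρ hτ (isStoppingTimeIn_const hT)),
    ae_restrict_mem (hR.1.measurableSpace_le _ (hC i).compl)] with ω h₁ h₂
  rw [h₁, Set.piecewise_eq_of_notMem _ _ _ h₂]

lemma IsValueFam.exists_large_on_annulus [IsProbabilityMeasure μ] (hφ : Admissible ℱ μ T φ)
    (hv : IsValueFam ℱ μ T φ v) (hR : IsStoppingTimeIn ℱ T R)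
    (hunb : ¬ BddAbove (expectedRewards ℱ μ T φ R)) (i K : ℕ) :
    ∃ τ : Ω → ℝ, ∃ j : ℕ, i < j ∧ IsStoppingTimeIn ℱ T τ ∧ R ≤ τ ∧ Integrable (φ τ) μ ∧
      (K : ℝ) ≤ ∫ ω in {ω | v R ω ≤ j} \ {ω | v R ω ≤ i}, φ τ ω ∂μ := by
  obtain ⟨τ, hτ, hRτ, hint, hbig⟩ := exists_integrable_integral_gt hφ hR hunb (i + K + 1)
  have hC (j : ℕ) : MeasurableSet {ω | v R ω ≤ j} :=
    hR.1.measurableSpace_le _ (hv.measurableSet_le hR j)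
  have hU : ⋃ j : ℕ, {ω | v R ω ≤ j} = Set.univ :=
    Set.eq_univ_of_forall fun ω => Set.mem_iUnion.2 (exists_nat_ge (v R ω))
  have hlim := tendsto_setIntegral_of_monotone hC (monotone_setOf_le_natCast (v R))
    (by rw [hU]; exact hint.integrableOn)
  rw [hU, setIntegral_univ] at hlim
  obtain ⟨j, hj, hij⟩ := ((hlim.eventually (lt_mem_nhds (sub_one_lt (∫ ω, φ τ ω ∂μ)))).and
    (eventually_gt_atTop i)).exists
  refine ⟨τ, j, hij, hτ, hRτ, hint, ?_⟩
  rw [setIntegral_sdiff (hC i) hint.integrableOn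
    ((monotone_setOf_le_natCast (v R)) hij.le)]
  have := hv.setIntegral_le hR (memTS_of_le hτ hRτ) hint (Nat.cast_nonneg i)
  linarith

lemma exists_measurable_index_le_iff {m' : MeasurableSpace Ω} {D : ℕ → Set Ω}
    (hD : ∀ n, MeasurableSet[m'] (D n)) (hD_mono : Monotone D) (hD_cover : ∀ ω, ∃ n, ω ∈ D n) :
    ∃ N : Ω → ℕ, (∀ n, MeasurableSet[m'] {ω | N ω = n}) ∧ ∀ ω n, N ω ≤ n ↔ ω ∈ D n := by
  classical
  refine ⟨fun ω => Nat.find (hD_cover ω), fun n => measurable_find hD_cover hD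
    (measurableSet_singleton n), fun ω n => (Nat.find_le_iff _ n).trans ?_⟩
  exact ⟨fun ⟨_, hk, hω⟩ => hD_mono hk hω, fun h => ⟨n, le_rfl, h⟩⟩

lemma Admissible.integrable_piecewise_comp (hT : 0 ≤ T) (hφ : Admissible ℱ μ T φ)
    {σ : ℕ → Ω → ℝ} (hσ : ∀ k, IsStoppingTimeIn ℱ T (σ k)) (hσ_int : ∀ k, Integrable (φ (σ k)) μ)
    {N : Ω → ℕ} {A : Set Ω} [DecidablePred (· ∈ A)] (hA : MeasurableSet A) {n : ℕ}
    (hN : ∀ ω ∈ A, N ω ≤ n) (hT_int : IntegrableOn (φ fun _ => T) Aᶜ μ)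
    (hρ : IsStoppingTimeIn ℱ T (A.piecewise (fun ω => σ (N ω) ω) fun _ => T)) :
    Integrable (φ (A.piecewise (fun ω => σ (N ω) ω) fun _ => T)) μ := by
  have hnn k ω : 0 ≤ φ (σ k) ω := (hφ.1 _ (hσ k)).2 ω
  -- dominated by `∑_{k ≤ n} φ (σ k)` on `A` and equal to `φ T` off `A`
  refine Integrable.mono' ((integrable_finsetSum (Finset.range (n + 1)) fun k _ => hσ_int k).add
    (hT_int.integrable_indicator hA.compl)) (hφ.aestronglyMeasurable hρ) ?_
  filter_upwards [ae_all_iff.2 fun k => hφ.2 _ _ hρ (hσ k),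
    hφ.2 _ _ hρ (isStoppingTimeIn_const hT)] with ω h₁ h₂
  rw [Real.norm_of_nonneg ((hφ.1 _ hρ).2 ω), Pi.add_apply]
  by_cases hω : ω ∈ A
  · rw [h₁ (N ω) (by simp [hω]), Set.indicator_of_notMem (Set.notMem_compl_iff.2 hω), add_zero]
    exact Finset.single_le_sum (fun k _ => hnn k ω)
      (Finset.mem_range.2 (Nat.lt_succ_of_le (hN ω hω)))
  · rw [h₂ (by simp [hω]), Set.indicator_of_mem hω]
    exact le_add_of_nonneg_left (Finset.sum_nonneg fun k _ => hnn k ω)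

lemma not_rceFam_of_annuli (hT : 0 ≤ T) (hφ : Admissible ℱ μ T φ)
    (hR : IsStoppingTime ℱ fun ω => (R ω : WithTop ℝ)) {D : ℕ → Set Ω}
    (hD : ∀ n, MeasurableSet[hR.measurableSpace] (D n)) (hD_mono : Monotone D)
    (hD_cover : ∀ ω, ∃ n, ω ∈ D n) (hT_int : IntegrableOn (φ fun _ => T) (D 0)ᶜ μ)
    {σ : ℕ → Ω → ℝ} (hσ : ∀ n, IsStoppingTimeIn ℱ T (σ n)) (hRσ : ∀ n, R ≤ σ n)
    (hσ_int : ∀ n, Integrable (φ (σ n)) μ)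
    (hσ_mass : ∀ n : ℕ, (n : ℝ) ≤ ∫ ω in D (n + 1) \ D n, φ (σ n) ω ∂μ) :
    ¬ RCEFam ℱ μ T φ := by
  classical
  intro hrce
  have hD_succ_mono : Monotone fun n => D (n + 1) := fun _ _ h => hD_mono (by omega)
  have hD_succ_cover ω : ∃ n, ω ∈ D (n + 1) :=
    (hD_cover ω).imp fun n hn => hD_mono n.le_succ hn
  obtain ⟨N, hN_meas, hN_le⟩ :=
    exists_measurable_index_le_iff (fun n => hD (n + 1)) hD_succ_mono hD_succ_cover
  have hN_eq ω n (hω : ω ∈ D (n + 1) \ D n) : N ω = n := by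
    refine le_antisymm ((hN_le ω n).2 hω.1) (not_lt.1 fun h => hω.2 ?_)
    exact hD_mono (by omega) ((hN_le ω (n - 1)).1 (by omega))
  set ξ : Ω → ℝ := fun ω => σ (N ω) ω
  have hξ : IsStoppingTimeIn ℱ T ξ := .comp_of_le_of_measurableSet_eq hR hσ hRσ hN_meas
  have hRξ : R ≤ ξ := fun ω => hRσ _ ω
  set ρ : ℕ → Ω → ℝ := fun n => (D (n + 1)).piecewise ξ fun _ => T
  have hρ n : IsStoppingTimeIn ℱ T (ρ n) := .piecewise hR hξ (isStoppingTimeIn_const hT) hRξ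
    (fun ω => (hRξ ω).trans (hξ.2 ω).2) (hD (n + 1))
  have hlim := hrce.tendsto_integral_piecewise hT hR hξ hRξ (fun n => hD (n + 1))
    hD_succ_mono hD_succ_cover
  refine not_tendsto_atTop_of_tendsto_nhds hlim
    (tendsto_atTop_mono (fun n => ?_) tendsto_natCast_atTop_atTop)
  have hρ_int : Integrable (φ (ρ n)) μ := hφ.integrable_piecewise_comp hT hσ hσ_int
    (hR.measurableSpace_le _ (hD (n + 1))) (fun ω hω => (hN_le ω n).2 hω)
    (hT_int.mono_set (Set.compl_subset_compl.2 (hD_mono (Nat.zero_le (n + 1))))) (hρ n)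
  calc (n : ℝ) ≤ ∫ ω in D (n + 1) \ D n, φ (σ n) ω ∂μ := hσ_mass n
    _ = ∫ ω in D (n + 1) \ D n, φ (ρ n) ω ∂μ := by
        refine setIntegral_congr_ae (hR.measurableSpace_le _ ((hD _).diff (hD _))) ?_
        filter_upwards [hφ.2 _ _ (hρ n) (hσ n)] with ω h hω
        exact (h (by simp [ρ, ξ, hω.1, hN_eq ω n hω])).symm
    _ ≤ ∫ ω, φ (ρ n) ω ∂μ := setIntegral_le_integral hρ_int (hφ.nonneg (hρ n))

lemma bddAbove_expectedRewards [IsProbabilityMeasure μ] (hT : 0 ≤ T)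
    (hφ : Admissible ℱ μ T φ) (hrce : RCEFam ℱ μ T φ) (hv : IsValueFam ℱ μ T φ v)
    (hR : IsStoppingTimeIn ℱ T R) : BddAbove (expectedRewards ℱ μ T φ R) := by
  by_contra hunb
  obtain ⟨τ, hτ, hRτ, -, hpos⟩ := exists_integrable_integral_gt hφ hR hunb 0
  obtain ⟨i₀, hi₀⟩ := hrce.exists_integrableOn_terminal hT hφ hv hR hτ hRτ hpos.ne'
  choose σ J hJ hσ hRσ hσ_int hσ_mass using hv.exists_large_on_annulus hφ hR hunb
  obtain ⟨idx, hidx_zero, hidx_succ⟩ : ∃ idx : ℕ → ℕ, idx 0 = i₀ ∧ ∀ n, idx (n + 1) = J (idx n) n :=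
    ⟨fun n => Nat.rec i₀ (fun k i => J i k) n, rfl, fun _ => rfl⟩
  have hidx : StrictMono idx := strictMono_nat_of_lt_succ fun n => hidx_succ n ▸ hJ _ _
  set D : ℕ → Set Ω := fun n => {ω | v R ω ≤ idx n}
  have hD_cover ω : ∃ n, ω ∈ D n := by
    obtain ⟨k, hk⟩ := exists_nat_ge (v R ω)
    exact ⟨k, hk.trans (Nat.cast_le.2 (hidx.id_le k))⟩
  have hmass (n : ℕ) : (n : ℝ) ≤ ∫ ω in D (n + 1) \ D n, φ (σ (idx n) n) ω ∂μ := by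
    simpa only [D, hidx_succ] using hσ_mass _ n
  exact not_rceFam_of_annuli hT hφ hR.1 (fun n => hv.measurableSet_le hR _)
    (fun _ _ hij => monotone_setOf_le_natCast (v R) (hidx.monotone hij)) hD_cover
    (by simpa only [D, hidx_zero] using hi₀)
    (fun n => hσ _ n) (fun n => hRσ _ n) (fun n => hσ_int _ n) hmass hrce

lemma integral_valueFam_eq_sSup [IsProbabilityMeasure μ] (hT : 0 ≤ T)
    (hφ : Admissible ℱ μ T φ) (hrce : RCEFam ℱ μ T φ) (hv : IsValueFam ℱ μ T φ v)
    (hR : IsStoppingTimeIn ℱ T R) :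
    Integrable (v R) μ ∧ ∫ ω, v R ω ∂μ = sSup (expectedRewards ℱ μ T φ R) := by
  rw [← image_integral_valueSet (μ := μ) (φ := φ) hR]
  refine (hv R hR).2.integral_eq_sSup ⟨_, R, memTS_self hR, rfl⟩ ?_ ?_ (valueSet_directed hφ hR)
    (by rw [image_integral_valueSet hR]; exact bddAbove_expectedRewards hT hφ hrce hv hR)
  · rintro _ ⟨τ, -, rfl⟩
    exact integrable_condExp
  · rintro _ ⟨τ, hτ, rfl⟩
    exact condExp_nonneg (hφ.nonneg hτ.1)

end Finiteness

/-- **Proposition 1.5.** If the admissible reward family `φ` is RCE, then the value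
function family is RCE. -/
theorem valueFunction_RCE {m : MeasurableSpace Ω}
    (ℱ : Filtration ℝ m) (μ : Measure Ω) [IsProbabilityMeasure μ]
    (T : ℝ) (hT : 0 < T)
    (φ : (Ω → ℝ) → Ω → ℝ) (hφ : Admissible ℱ μ T φ) (hrce : RCEFam ℱ μ T φ)
    (v : (Ω → ℝ) → Ω → ℝ) (hv : IsValueFam ℱ μ T φ v) :
    RCEFam ℱ μ T v := by
  intro θ θn hθ hθn hconv
  have hvalue R (hR : IsStoppingTimeIn ℱ T R) :
      ∫ ω, v R ω ∂μ = sSup (expectedRewards ℱ μ T φ R) :=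
    (integral_valueFam_eq_sSup hT.le hφ hrce hv hR).2
  have hbdd R (hR : IsStoppingTimeIn ℱ T R) : BddAbove (expectedRewards ℱ μ T φ R) :=
    bddAbove_expectedRewards hT.le hφ hrce hv hR
  have hθ_le n : ∀ᵐ ω ∂μ, θ ω ≤ θn n ω := by
    filter_upwards [hconv] with ω h using h.1.le_of_tendsto h.2 n
  simp only [hvalue θ hθ, hvalue _ (hθn _)]
  refine tendsto_order.2 ⟨fun b hb => ?_, fun b hb => Eventually.of_forall fun n => ?_⟩
  · -- any `τ ∈ T_θ` is approached by `τ ⊔ θn n ∈ T_{θn n}`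
    obtain ⟨_, ⟨τ, hτ, rfl⟩, hbτ⟩ := exists_lt_of_lt_csSup
      ⟨_, integral_mem_expectedRewards (memTS_self hθ)⟩ hb
    filter_upwards [(hrce.tendsto_integral_max hτ hθn hconv).eventually_const_lt hbτ] with n hn
    exact hn.trans_le (le_csSup (hbdd _ (hθn n)) (integral_mem_expectedRewards
      (memTS_of_le (hτ.1.max (hθn n)) fun _ => le_max_right _ _)))
  · exact (csSup_le_csSup (hbdd θ hθ)
      ⟨_, integral_mem_expectedRewards (memTS_self (hθn n))⟩
      (expectedRewards_subset (hθ_le n))).trans_lt hb
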